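/- arXiv:2406.15841 — 3 statements merged into one kernel-verified Lean document; each statement's English description precedes it below -/
import Mathlib

section
/- Let D be a digraph, S = u_1 u_2 ⋯ u_s a directed trail in D, and x ∈ V(D). If D does not contain a directed trail from u_1 to u_s with vertex set V(S) ∪ {x}, then d_S(x) ≤ |V(S)|, where d_S(x) = d⁻_S(x) + d⁺_S(x). -/
/-- A digraph: loopless, no parallel arcs (arcs given by a relation). -/
structure Digr (V : Type) where
  Adj : V → V → Prop
  loopless : ∀ v, ¬ Adj v v

namespace Digr

variable {V : Type}

/-- The list of arcs (consecutive pairs) of a walk given by its list of vertices. -/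
def arcs (l : List V) : List (V × V) := l.zip l.tail

/-- The vertex set of a walk. -/
def verts (l : List V) : Set V := {v | v ∈ l}

/-- A directed trail: a nonempty walk repeating no arc. -/
def IsDitrail (D : Digr V) (l : List V) : Prop :=
  l ≠ [] ∧ l.Chain' D.Adj ∧ (arcs l).Nodup

/-- A closed directed trail. -/
def IsClosedDitrail (D : Digr V) (l : List V) : Prop :=
  D.IsDitrail l ∧ l.head? = l.getLast?

/-- A digraph is supereulerian if it has a spanning closed ditrail. -/
def Supereulerian (D : Digr V) : Prop :=
  ∃ l : List V, D.IsClosedDitrail l ∧ ∀ v : V, v ∈ l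

/-- Strong connectivity. -/
def Strong (D : Digr V) : Prop :=
  ∀ u v : V, Relation.ReflTransGen D.Adj u v

noncomputable def outDeg (D : Digr V) (v : V) : ℕ := {w | D.Adj v w}.ncard
noncomputable def inDeg (D : Digr V) (v : V) : ℕ := {w | D.Adj w v}.ncard
noncomputable def deg (D : Digr V) (v : V) : ℕ := D.inDeg v + D.outDeg v

noncomputable def outDegOn (D : Digr V) (S : Set V) (v : V) : ℕ := {w ∈ S | D.Adj v w}.ncard
noncomputable def inDegOn (D : Digr V) (S : Set V) (v : V) : ℕ := {w ∈ S | D.Adj w v}.ncard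
noncomputable def degOn (D : Digr V) (S : Set V) (v : V) : ℕ := D.inDegOn S v + D.outDegOn S v

def Nonadjacent (D : Digr V) (u v : V) : Prop := ¬ D.Adj u v ∧ ¬ D.Adj v u
def Dominated (D : Digr V) (u v : V) : Prop := ∃ w, D.Adj w u ∧ D.Adj w v
def Dominating (D : Digr V) (u v : V) : Prop := ∃ w, D.Adj u w ∧ D.Adj v w

/-- A semicomplete multipartite digraph: a biorientation of a complete
multipartite graph, i.e. two vertices are joined by an arc (in some direction)
iff they lie in different parts of some partition. -/
def IsSemicompleteMultipartite (D : Digr V) : Prop :=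
  ∃ (ι : Type) (part : V → ι), ∀ u v : V, (D.Adj u v ∨ D.Adj v u) ↔ part u ≠ part v

end Digr



/-!
Since `S` itself is not a forbidden trail, `x ∉ V(S)`. If a vertex `v` of `S` were joined to `x`
in both directions, inserting the detour `v → x → v` at an occurrence of `v` would give a
forbidden trail: the two new arcs are fresh because `x ∉ V(S)`. Hence the in- and
out-neighbourhoods of `x` in `V(S)` are disjoint subsets of `V(S)`.
-/

namespace Digr

variable {V : Type}

lemma arcs_append_cons (l₁ l₂ : List V) (c : V) :
    arcs (l₁ ++ c :: l₂) = arcs (l₁ ++ [c]) ++ arcs (c :: l₂) := by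
  induction l₁ with
  | nil => rfl
  | cons a t ih =>
    cases t with
    | nil => rfl
    | cons b t => simpa [arcs] using ih

lemma mem_of_mem_arcs {p : V × V} {l : List V} (h : p ∈ arcs l) : p.1 ∈ l ∧ p.2 ∈ l :=
  ⟨(List.of_mem_zip h).1, List.mem_of_mem_tail (List.of_mem_zip h).2⟩

lemma arcs_detour_perm (a b : List V) (v x : V) :
    (arcs (a ++ v :: x :: v :: b)).Perm ((v, x) :: (x, v) :: arcs (a ++ v :: b)) := by
  rw [arcs_append_cons a (x :: v :: b), arcs_append_cons a b]
  change (arcs (a ++ [v]) ++ (v, x) :: (x, v) :: arcs (v :: b)).Perm _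
  exact List.perm_middle.trans (List.perm_middle.cons _)

theorem IsDitrail.detour {D : Digr V} {a b : List V} {v x : V}
    (hs : D.IsDitrail (a ++ v :: b)) (hx : x ∉ a ++ v :: b)
    (hvx : D.Adj v x) (hxv : D.Adj x v) :
    D.IsDitrail (a ++ v :: x :: v :: b) := by
  obtain ⟨-, hchain, hnodup⟩ := hs
  have hfresh : ∀ p ∈ arcs (a ++ v :: b), p.1 ≠ x ∧ p.2 ≠ x := fun p hp =>
    ⟨fun h => hx (h ▸ (mem_of_mem_arcs hp).1), fun h => hx (h ▸ (mem_of_mem_arcs hp).2)⟩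
  refine ⟨by simp, ?_, (arcs_detour_perm a b v x).nodup_iff.2 ?_⟩
  · rw [List.Chain', List.isChain_split] at hchain ⊢
    simp only [List.isChain_cons_cons, hchain.1, hvx, hxv, hchain.2, and_self]
  · refine List.nodup_cons.2 ⟨?_, List.nodup_cons.2 ⟨fun h => (hfresh _ h).1 rfl, hnodup⟩⟩
    intro h
    rcases List.mem_cons.1 h with h | h
    · obtain ⟨rfl, -⟩ := Prod.mk.inj h
      exact D.loopless v hvx
    · exact (hfresh _ h).2 rfl

lemma head?_detour (a b : List V) (v x : V) :
    (a ++ v :: x :: v :: b).head? = (a ++ v :: b).head? := by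
  cases a <;> rfl

lemma getLast?_detour (a b : List V) (v x : V) :
    (a ++ v :: x :: v :: b).getLast? = (a ++ v :: b).getLast? := by
  rw [show a ++ v :: x :: v :: b = (a ++ [v, x]) ++ v :: b by simp,
    List.getLast?_append_of_ne_nil _ (List.cons_ne_nil _ _),
    List.getLast?_append_of_ne_nil _ (List.cons_ne_nil _ _)]

lemma verts_detour (a b : List V) (v x : V) :
    verts (a ++ v :: x :: v :: b) = verts (a ++ v :: b) ∪ {x} := by
  ext w
  simp only [verts, Set.mem_ofPred_eq, Set.mem_union, Set.mem_singleton_iff, List.mem_append,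
    List.mem_cons]
  tauto

theorem degOn_le_ncard {D : Digr V} {S : Set V} (hS : S.Finite) {x : V}
    (h : ∀ v ∈ S, D.Adj v x → ¬ D.Adj x v) : D.degOn S x ≤ S.ncard := by
  have hdisj : Disjoint {w ∈ S | D.Adj w x} {w ∈ S | D.Adj x w} :=
    Set.disjoint_left.2 fun w hin hout => h w hin.1 hin.2 hout.2
  have hsub : {w ∈ S | D.Adj w x} ∪ {w ∈ S | D.Adj x w} ⊆ S :=
    Set.union_subset (Set.sep_subset _ _) (Set.sep_subset _ _)
  rw [degOn, inDegOn, outDegOn, ← Set.ncard_union_eq hdisj (hS.subset (Set.sep_subset _ _))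
    (hS.subset (Set.sep_subset _ _))]
  exact Set.ncard_le_ncard hsub hS

end Digr

/-- Corollary: if $D$ has no $(u_1,u_s)$-ditrail with vertex set
$V(S) ∪ \{x\}$, then $d_S(x) ≤ |V(S)|$. -/
theorem stmt1 {V : Type} (D : Digr V) (s : List V) (x : V)
    (hs : D.IsDitrail s)
    (hno : ¬ ∃ l : List V, D.IsDitrail l ∧ l.head? = s.head? ∧
      l.getLast? = s.getLast? ∧
      Digr.verts l = Digr.verts s ∪ {x}) :
    D.degOn (Digr.verts s) x ≤ (Digr.verts s).ncard := by
  have hx : x ∉ s := fun hx => hno ⟨s, hs, rfl, rfl, by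
    rw [Set.union_singleton, Set.insert_eq_of_mem (show x ∈ Digr.verts s from hx)]⟩
  refine Digr.degOn_le_ncard s.finite_toSet fun v hv hvx hxv => hno ?_
  obtain ⟨a, b, rfl⟩ := List.append_of_mem hv
  exact ⟨_, hs.detour hx hvx hxv, Digr.head?_detour .., Digr.getLast?_detour ..,
    Digr.verts_detour ..⟩
end

section
/- Let T be a closed directed trail in a digraph D with |V(T)| maximum among all closed ditrails, and suppose T does not span D. Let P = x_1 x_2 ⋯ x_t be a directed path with both endpoints x_1, x_t on T and all internal vertices outside T, chosen so that the T-segment from the initial attachment vertex x_1 to the terminal attachment vertex x_t is as short as possible, and let Q be the sub-trail of T from x_t back to x_1. Then for each internal vertex x of P and each internal vertex y of the T-segment from x_1 to x_t, the vertices x and y are nonadjacent in D. -/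
namespace DigrAux

open Digr (arcs verts)

variable {V : Type}

lemma arcs_cons_cons (a b : V) (l : List V) :
    arcs (a :: b :: l) = (a, b) :: arcs (b :: l) := rfl

lemma arcs_nil : arcs ([] : List V) = [] := rfl
lemma arcs_single (a : V) : arcs [a] = [] := rfl

lemma arcs_append_cons (l r : List V) (a : V) :
    arcs (l ++ a :: r) = arcs (l ++ [a]) ++ arcs (a :: r) := by
  induction l with
  | nil => simp [arcs_single]
  | cons b l ih =>
    cases l with
    | nil => simp [arcs_cons_cons, arcs_single]
    | cons c l' =>
      simp only [List.cons_append, arcs_cons_cons] at *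
      rw [ih]

lemma arcs_concat (l : List V) (hl : l ≠ []) (w : V) :
    arcs (l ++ [w]) = arcs l ++ [(l.getLast hl, w)] := by
  induction l with
  | nil => simp at hl
  | cons b l ih =>
    cases l with
    | nil => simp [arcs_cons_cons, arcs_single, arcs_nil]
    | cons c l' =>
      have := ih (by simp)
      simp only [List.cons_append, arcs_cons_cons] at this ⊢
      rw [this]
      simp [List.getLast]

lemma mem_arcs_imp {a b : V} {l : List V} (h : (a, b) ∈ arcs l) :
    a ∈ l.dropLast ∧ b ∈ l.tail := by
  induction l with
  | nil => simp [arcs_nil] at h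
  | cons c l ih =>
    cases l with
    | nil => simp [arcs_single] at h
    | cons d l' =>
      rw [arcs_cons_cons] at h
      rcases List.mem_cons.1 h with h | h
      · rw [Prod.mk.injEq] at h
        obtain ⟨rfl, rfl⟩ := h
        simp [List.dropLast_cons₂]
      · obtain ⟨h1, h2⟩ := ih h
        rw [List.dropLast_cons₂]
        exact ⟨List.mem_cons_of_mem _ h1, List.mem_cons_of_mem _ h2⟩

lemma adj_of_mem_arcs {R : V → V → Prop} {a b : V} {l : List V}
    (hc : l.Chain' R) (h : (a, b) ∈ arcs l) : R a b := by
  induction l with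
  | nil => simp [arcs_nil] at h
  | cons c l ih =>
    cases l with
    | nil => simp [arcs_single] at h
    | cons d l' =>
      rw [arcs_cons_cons] at h
      unfold List.Chain' at hc
      rw [List.isChain_cons_cons] at hc
      rcases List.mem_cons.1 h with h | h
      · rw [Prod.mk.injEq] at h
        obtain ⟨rfl, rfl⟩ := h
        exact hc.1
      · exact ih hc.2 h

lemma nodup_arcs {l : List V} (h : l.Nodup) : (arcs l).Nodup := by
  induction l with
  | nil => simp [arcs_nil]
  | cons c l ih =>
    cases l with
    | nil => simp [arcs_single]
    | cons d l' =>
      rw [arcs_cons_cons, List.nodup_cons]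
      refine ⟨fun hm => ?_, ih (List.nodup_cons.1 h).2⟩
      have := (mem_arcs_imp hm).1
      exact (List.nodup_cons.1 h).1 ((List.dropLast_sublist _).mem this)

lemma mem_dropLast_decomp {y : V} {l : List V} (h : y ∈ l.dropLast) :
    ∃ u v, l = u ++ y :: v ∧ v ≠ [] := by
  induction l with
  | nil => simp at h
  | cons a l ih =>
    cases l with
    | nil => simp at h
    | cons b l' =>
      rw [List.dropLast_cons₂] at h
      rcases List.mem_cons.1 h with rfl | h
      · exact ⟨[], b :: l', rfl, by simp⟩
      · obtain ⟨u, v, heq, hv⟩ := ih h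
        exact ⟨a :: u, v, by simp [heq], hv⟩

lemma mem_dropLast_tail_decomp {y : V} {l : List V} (h : y ∈ l.dropLast.tail) :
    ∃ u v, l = u ++ y :: v ∧ u ≠ [] ∧ v ≠ [] := by
  cases l with
  | nil => simp at h
  | cons a t =>
    cases t with
    | nil => simp at h
    | cons b t' =>
      rw [List.dropLast_cons₂, List.tail_cons] at h
      obtain ⟨u, v, heq, hv⟩ := mem_dropLast_decomp h
      exact ⟨a :: u, v, by simp [heq], by simp, hv⟩

lemma length_arcs (l : List V) : (arcs l).length = l.length - 1 := by
  simp [Digr.arcs, List.length_zip]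

lemma mem_of_mem_arcs {a b : V} {l : List V} (h : (a, b) ∈ arcs l) :
    a ∈ l ∧ b ∈ l := by
  obtain ⟨h1, h2⟩ := mem_arcs_imp h
  exact ⟨(List.dropLast_sublist _).mem h1, (List.tail_sublist _).mem h2⟩

lemma splice_contra (D : Digr V) (S : List V) (hS : D.IsClosedDitrail S)
    (hSmax : ∀ S' : List V, D.IsClosedDitrail S' →
      (verts S').ncard ≤ (verts S).ncard)
    (z : V) (hz : z ∈ S) (C : List V) (hC : C ≠ [])
    (hCoff : ∀ c ∈ C, c ∉ S) (hCnd : C.Nodup)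
    (hchain : ((z :: C) ++ [z]).Chain' D.Adj) : False := by
  obtain ⟨A, B, hSdec⟩ := List.append_of_mem hz
  subst hSdec
  have hzC : z ∉ C := fun h => hCoff z h hz
  have hSchain : (A ++ z :: B).Chain' D.Adj := hS.1.2.1
  have hSnd : (arcs (A ++ z :: B)).Nodup := hS.1.2.2
  have hA1 : arcs (A ++ z :: B) = arcs (A ++ [z]) ++ arcs (z :: B) :=
    arcs_append_cons _ _ _
  set S' : List V := A ++ z :: (C ++ z :: B) with hS'def
  -- arcs of S'
  have harcs : arcs S' = arcs (A ++ [z]) ++ (arcs ((z :: C) ++ [z]) ++ arcs (z :: B)) := by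
    rw [hS'def, arcs_append_cons A (C ++ z :: B) z]
    congr 1
    have : (z : V) :: (C ++ z :: B) = (z :: C) ++ z :: B := by simp
    rw [this, arcs_append_cons (z :: C) B z]
  -- components of arcs of S are in S
  have hScomp : ∀ a b : V, (a, b) ∈ arcs (A ++ z :: B) → a ∈ A ++ z :: B ∧ b ∈ A ++ z :: B :=
    fun a b h => mem_of_mem_arcs h
  -- arcs of the cycle have a component in C
  have hCcomp : ∀ a b : V, (a, b) ∈ arcs ((z :: C) ++ [z]) → a ∈ C ∨ b ∈ C := by
    intro a b h
    obtain ⟨h1, h2⟩ := mem_arcs_imp h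
    rw [List.dropLast_concat] at h1
    simp only [List.cons_append, List.tail_cons, List.mem_append, List.mem_cons,
      List.mem_singleton] at h1 h2
    rcases h1 with rfl | h1
    · rcases h2 with h2 | h2
      · exact Or.inr h2
      · rcases h2 with rfl | h2
        · exact absurd (adj_of_mem_arcs hchain h) (D.loopless _)
        · simp at h2
    · exact Or.inl h1
  have hcycnd : (arcs ((z :: C) ++ [z])).Nodup := by
    rw [arcs_concat (z :: C) (by simp) z]
    rw [List.nodup_append]
    refine ⟨nodup_arcs (by simp [hCnd, hzC]), List.nodup_singleton _, ?_⟩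
    intro ab hab hab' hmem heq
    rw [List.mem_singleton] at hmem
    subst hmem
    subst heq
    have := (mem_arcs_imp hab).2
    rw [List.tail_cons] at this
    exact hzC this
  -- chain of S'
  have hsplit := List.isChain_append.1 hSchain
  have hcyc := List.isChain_append.1 hchain
  have hS'chain : S'.Chain' D.Adj := by
    rw [hS'def, show A ++ z :: (C ++ z :: B) = A ++ ((z :: C) ++ (z :: B)) by simp]
    unfold List.Chain'
    rw [List.isChain_append]
    refine ⟨hsplit.1, ?_, ?_⟩
    · rw [List.isChain_append]
      refine ⟨hcyc.1, hsplit.2.1, ?_⟩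
      intro a ha b hb
      simp only [List.head?_cons, Option.mem_def, Option.some.injEq] at hb
      subst hb
      exact hcyc.2.2 a ha z (by simp)
    · intro a ha b hb
      have : ((z :: C) ++ (z :: B)).head? = some z := by simp
      rw [this, Option.mem_def, Option.some.injEq] at hb
      subst hb
      exact hsplit.2.2 a ha z (by simp)
  -- nodup of arcs of S'
  have hS'nd : (arcs S').Nodup := by
    rw [harcs]
    rw [hA1, List.nodup_append] at hSnd
    obtain ⟨hp, hq, hpq⟩ := hSnd
    have hinS : ∀ a b : V, (a, b) ∈ arcs (A ++ [z]) ∨ (a, b) ∈ arcs (z :: B) →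
        a ∈ A ++ z :: B ∧ b ∈ A ++ z :: B := by
      intro a b h
      exact hScomp a b (by rw [hA1, List.mem_append]; exact h)
    have hdisj : ∀ ab ∈ arcs ((z :: C) ++ [z]),
        ab ∉ arcs (A ++ [z]) ∧ ab ∉ arcs (z :: B) := by
      rintro ⟨a, b⟩ hab
      rcases hCcomp a b hab with hc | hc
      · constructor <;> intro hm
        · exact hCoff a hc (hinS a b (Or.inl hm)).1
        · exact hCoff a hc (hinS a b (Or.inr hm)).1
      · constructor <;> intro hm
        · exact hCoff b hc (hinS a b (Or.inl hm)).2
        · exact hCoff b hc (hinS a b (Or.inr hm)).2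
    rw [List.nodup_append]
    refine ⟨hp, ?_, ?_⟩
    · rw [List.nodup_append]
      refine ⟨hcycnd, hq, ?_⟩
      intro ab h1 ab' h2 heq
      rw [← heq] at h2
      exact (hdisj ab h1).2 h2
    · intro ab h1 ab' h2 heq
      rw [← heq] at h2
      rcases List.mem_append.1 h2 with h2 | h2
      · exact (hdisj ab h2).1 h1
      · exact hpq _ h1 _ h2 rfl
  -- S' is a closed ditrail
  have hS'closed : D.IsClosedDitrail S' := by
    refine ⟨⟨?_, hS'chain, hS'nd⟩, ?_⟩
    · rw [hS'def]; simp
    · have h1 : S'.head? = (A ++ z :: B).head? := by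
        rw [hS'def]
        rcases A with _ | ⟨a, A'⟩ <;> simp
      have h2 : S'.getLast? = (A ++ z :: B).getLast? := by
        rw [hS'def, List.getLast?_append, List.getLast?_append]
        congr 1
        rw [show (z : V) :: (C ++ z :: B) = (z :: C) ++ (z :: B) by simp,
          List.getLast?_append]
        have : (z :: B).getLast? = some ((z :: B).getLast (by simp)) :=
          List.getLast?_eq_getLast (by simp)
        rw [this]
        simp [Option.or]
      rw [h1, h2]
      exact hS.2
  -- cardinality contradiction
  have hle := hSmax S' hS'closed
  obtain ⟨c0, C', rfl⟩ : ∃ c0 C', C = c0 :: C' := by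
    cases C with
    | nil => exact absurd rfl hC
    | cons c0 C' => exact ⟨c0, C', rfl⟩
  have hsub : verts (A ++ z :: B) ⊂ verts S' := by
    constructor
    · intro v hv
      simp only [Digr.verts, Set.mem_setOf_eq, hS'def, List.mem_append,
        List.mem_cons] at hv ⊢
      tauto
    · intro hcon
      have hc0 : c0 ∈ verts S' := by
        simp [Digr.verts, hS'def]
      exact hCoff c0 (by simp) (hcon hc0)
  have := Set.ncard_lt_ncard hsub (List.finite_toSet S')
  omega

end DigrAux


open DigrAux

/-- Let $S$ be a maximum-order closed ditrail of $D$, not spanning, and let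
$T = y_0 x_1 ⋯ x_t y_{p+1}$ be an $(S,S)$-dipath (internal vertex list $X$)
chosen so that the sub-ditrail $P$ of $S$ from $y_0$ to $y_{p+1}$ is as
short as possible. Then every internal vertex of $T$ is nonadjacent to every
internal vertex of $P$. -/
theorem stmt8 {V : Type} (D : Digr V) (S : List V)
    (hS : D.IsClosedDitrail S)
    (hSmax : ∀ S' : List V, D.IsClosedDitrail S' →
      (Digr.verts S').ncard ≤ (Digr.verts S).ncard)
    (hnonspan : ∃ v : V, v ∉ S)
    (y0 yq : V) (X : List V) (P : List V)
    -- $T = y_0 :: X ++ [yq]$ is an $(S,S)$-dipath with internal vertices $X ≠ []$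
    (hX : X ≠ [])
    (hTchain : (y0 :: (X ++ [yq])).Chain' D.Adj)
    (hTnodup : (y0 :: (X ++ [yq])).Nodup)
    (hy0 : y0 ∈ S) (hyq : yq ∈ S) (hXoff : ∀ x ∈ X, x ∉ S)
    -- $P$ is a shortest sub-ditrail of $S$ from $y_0$ to $yq$
    (hP : D.IsDitrail P) (hPsub : ∀ a ∈ Digr.arcs P, a ∈ Digr.arcs S)
    (hPh : P.head? = some y0) (hPl : P.getLast? = some yq)
    -- minimality of $P$ over all choices of such a dipath and sub-ditrail
    (hmin : ∀ (y0' yq' : V) (X' P' : List V), X' ≠ [] →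
      (y0' :: (X' ++ [yq'])).Chain' D.Adj → (y0' :: (X' ++ [yq'])).Nodup →
      y0' ∈ S → yq' ∈ S → (∀ x ∈ X', x ∉ S) →
      D.IsDitrail P' → (∀ a ∈ Digr.arcs P', a ∈ Digr.arcs S) →
      P'.head? = some y0' → P'.getLast? = some yq' →
      (Digr.arcs P).length ≤ (Digr.arcs P').length) :
    ∀ x ∈ X, ∀ y ∈ P.dropLast.tail, ¬ D.Adj x y ∧ ¬ D.Adj y x := by
  intro x hxX y hyP
  obtain ⟨XA, XB, rfl⟩ := List.append_of_mem hxX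
  obtain ⟨U, W, hPdec, hUne, hWne⟩ := DigrAux.mem_dropLast_tail_decomp hyP
  subst hPdec
  obtain ⟨w, W', rfl⟩ : ∃ w W', W = w :: W' := by
    cases W with
    | nil => exact absurd rfl hWne
    | cons w W' => exact ⟨w, W', rfl⟩
  obtain ⟨u, U', rfl⟩ : ∃ u U', U = u :: U' := by
    cases U with
    | nil => exact absurd rfl hUne
    | cons u U' => exact ⟨u, U', rfl⟩
  set U : List V := u :: U' with hUdef
  set W : List V := w :: W' with hWdef
  -- T pieces
  have hchainL : ((y0 :: XA) ++ [x]).Chain' D.Adj :=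
    hTchain.prefix ⟨XB ++ [yq], by simp⟩
  have hchainR : (x :: (XB ++ [yq])).Chain' D.Adj :=
    hTchain.suffix ⟨y0 :: XA, by simp⟩
  have hndL : ((y0 :: XA) ++ [x]).Nodup :=
    List.Nodup.sublist (List.IsPrefix.sublist ⟨XB ++ [yq], by simp⟩) hTnodup
  have hndR : (x :: (XB ++ [yq])).Nodup :=
    List.Nodup.sublist (List.IsSuffix.sublist ⟨y0 :: XA, by simp⟩) hTnodup
  have hlinkx : ∀ b : V, D.Adj x b → (((y0 :: XA) ++ [x]) ++ [b]).Chain' D.Adj := by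
    intro b hb
    unfold List.Chain'
    rw [List.isChain_append]
    exact ⟨hchainL, List.isChain_singleton b, by
      intro a ha c hc
      simp only [List.getLast?_concat, Option.mem_def, Option.some.injEq] at ha
      simp only [List.head?_cons, Option.mem_def, Option.some.injEq] at hc
      subst ha; subst hc; exact hb⟩
  have hy0yq : y0 ≠ yq := by
    have := (List.nodup_cons.1 hTnodup).1
    simp only [List.mem_append, List.mem_cons, List.mem_singleton] at this
    tauto
  -- P pieces
  have harcsP : Digr.arcs (U ++ y :: W) = Digr.arcs (U ++ [y]) ++ Digr.arcs (y :: W) :=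
    arcs_append_cons _ _ _
  have hyS : y ∈ S := by
    have hmem : ((y, w) : V × V) ∈ Digr.arcs (U ++ y :: W) := by
      rw [harcsP, List.mem_append]
      exact Or.inr (by rw [hWdef, arcs_cons_cons]; exact List.mem_cons_self)
    exact (mem_of_mem_arcs (hPsub _ hmem)).1
  have hchainPL : (U ++ [y]).Chain' D.Adj := hP.2.1.prefix ⟨W, by simp⟩
  have hchainPR : (y :: W).Chain' D.Adj := hP.2.1.suffix ⟨U, rfl⟩
  have hndP := hP.2.2
  rw [harcsP, List.nodup_append] at hndP
  have hsubPL : ∀ a ∈ Digr.arcs (U ++ [y]), a ∈ Digr.arcs S := by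
    intro a ha
    exact hPsub a (by rw [harcsP, List.mem_append]; exact Or.inl ha)
  have hsubPR : ∀ a ∈ Digr.arcs (y :: W), a ∈ Digr.arcs S := by
    intro a ha
    exact hPsub a (by rw [harcsP, List.mem_append]; exact Or.inr ha)
  have hheadPL : (U ++ [y]).head? = some y0 := by
    rw [hUdef] at hPh ⊢
    simpa using (by simpa using hPh : u = y0)
  have hlastPR : (y :: W).getLast? = some yq := by
    have h1 : (U ++ y :: W).getLast? = (y :: W).getLast? := by
      rw [List.getLast?_append]
      have : (y :: W).getLast? = some ((y :: W).getLast (by simp)) :=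
        List.getLast?_eq_getLast (by simp)
      rw [this]; simp [Option.or]
    rw [← h1]; exact hPl
  have hlenP : (Digr.arcs (U ++ y :: W)).length
      = (Digr.arcs (U ++ [y])).length + (Digr.arcs (y :: W)).length := by
    rw [harcsP, List.length_append]
  have hlenPL : 1 ≤ (Digr.arcs (U ++ [y])).length := by
    rw [length_arcs, hUdef]; simp
  have hlenPR : 1 ≤ (Digr.arcs (y :: W)).length := by
    rw [length_arcs, hWdef]; simp
  have hxXmem : ∀ c ∈ XA ++ [x], c ∈ XA ++ x :: XB := by
    intro c hc
    rcases List.mem_append.1 hc with hc | hc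
    · exact List.mem_append.2 (Or.inl hc)
    · rw [List.mem_singleton] at hc
      subst hc
      exact List.mem_append.2 (Or.inr (List.mem_cons_self))
  have hxXmem' : ∀ c ∈ x :: XB, c ∈ XA ++ x :: XB := fun c hc =>
    List.mem_append.2 (Or.inr hc)
  have hXnd : (XA ++ x :: XB).Nodup := by
    have := (List.nodup_cons.1 hTnodup).2
    rw [List.nodup_append] at this
    exact this.1
  constructor
  · -- ¬ Adj x y
    intro hadj
    by_cases hyy0 : y = y0
    · subst hyy0
      refine splice_contra D S hS hSmax y hy0 (XA ++ [x]) (by simp) ?_ ?_ ?_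
      · exact fun c hc => hXoff c (hxXmem c hc)
      · exact List.Nodup.sublist
          ((List.Sublist.refl XA).append
            (List.cons_sublist_cons.2 (List.nil_sublist XB))) hXnd
      · have : (y : V) :: (XA ++ [x]) ++ [y] = ((y :: XA) ++ [x]) ++ [y] := by simp
        rw [this]
        exact hlinkx y hadj
    · have hchain' : (y0 :: ((XA ++ [x]) ++ [y])).Chain' D.Adj := by
        have : (y0 : V) :: ((XA ++ [x]) ++ [y]) = ((y0 :: XA) ++ [x]) ++ [y] := by simp
        rw [this]
        exact hlinkx y hadj
      have hnd' : (y0 :: ((XA ++ [x]) ++ [y])).Nodup := by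
        have : (y0 : V) :: ((XA ++ [x]) ++ [y]) = ((y0 :: XA) ++ [x]) ++ [y] := by simp
        rw [this, List.nodup_append]
        refine ⟨hndL, List.nodup_singleton _, ?_⟩
        intro c hc hc' hmem heq
        rw [List.mem_singleton] at hmem
        rw [hmem] at heq
        subst heq
        rcases List.mem_append.1 hc with hc | hc
        · rcases List.mem_cons.1 hc with rfl | hc
          · exact hyy0 rfl
          · exact hXoff c (hxXmem c (List.mem_append.2 (Or.inl hc))) hyS
        · rw [List.mem_singleton] at hc
          subst hc
          exact hXoff c (hxXmem c (by simp)) hyS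
      have hled := hmin y0 y (XA ++ [x]) (U ++ [y]) (by simp) hchain' hnd' hy0 hyS
        (fun c hc => hXoff c (hxXmem c hc))
        ⟨by simp, hchainPL, hndP.1⟩ hsubPL hheadPL List.getLast?_concat
      omega
  · -- ¬ Adj y x
    intro hadj
    by_cases hyyq : y = yq
    · subst hyyq
      refine splice_contra D S hS hSmax y hyq (x :: XB) (by simp) ?_ ?_ ?_
      · exact fun c hc => hXoff c (hxXmem' c hc)
      · exact List.Nodup.sublist (List.IsSuffix.sublist ⟨XA, rfl⟩) hXnd
      · have : (y : V) :: (x :: XB) ++ [y] = y :: (x :: (XB ++ [y])) := by simp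
        rw [this]; unfold List.Chain'; rw [List.isChain_cons_cons]
        exact ⟨hadj, hchainR⟩
    · have hchain' : (y :: ((x :: XB) ++ [yq])).Chain' D.Adj := by
        have : (y : V) :: ((x :: XB) ++ [yq]) = y :: (x :: (XB ++ [yq])) := by simp
        rw [this]; unfold List.Chain'; rw [List.isChain_cons_cons]
        exact ⟨hadj, hchainR⟩
      have hnd' : (y :: ((x :: XB) ++ [yq])).Nodup := by
        rw [List.nodup_cons]
        constructor
        · intro hc
          rcases List.mem_append.1 hc with hc | hc
          · exact hXoff y (hxXmem' y hc) hyS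
          · rw [List.mem_singleton] at hc
            exact hyyq hc
        · exact hndR
      have hled := hmin y yq (x :: XB) (y :: W) (by simp) hchain' hnd' hyS hyq
        (fun c hc => hXoff c (hxXmem' c hc))
        ⟨by simp, hchainPR, hndP.2.1⟩ hsubPR rfl hlastPR
      omega
end

section
/- For every n ≥ 4, there exists a strong digraph D on n vertices which is not supereulerian, contains exactly one pair {u,v} of dominated nonadjacent vertices, and satisfies d(u) + d(v) = 2n − 4 as well as d⁻(u) + d⁺(v) = d⁺(u) + d⁻(v) = n − 2. -/
/-!
A closed trail leaves every vertex exactly as often as it enters it. In the digraph below (the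
paper's construction with `n₁ = 1`), `u` and `v` can only be left towards `w'`, so a spanning
closed trail enters `w'` at least twice; but `(w', w)` is the only arc leaving `w'`.
-/

namespace Digr

variable {V : Type}

lemma arcs_cons_cons (a b : V) (t : List V) : arcs (a :: b :: t) = (a, b) :: arcs (b :: t) :=
  rfl

lemma map_fst_arcs : ∀ l : List V, (arcs l).map Prod.fst = l.dropLast
  | [] => rfl
  | [_] => rfl
  | a :: b :: t => by rw [arcs_cons_cons, List.map_cons, map_fst_arcs (b :: t)]; rfl

lemma map_snd_arcs (l : List V) : (arcs l).map Prod.snd = l.tail :=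
  List.map_snd_zip (by cases l <;> simp)

lemma adj_of_mem_arcs {R : V → V → Prop} :
    ∀ {l : List V}, l.IsChain R → ∀ {p : V × V}, p ∈ arcs l → R p.1 p.2
  | [], _, _, hp | [_], _, _, hp => by simp [arcs] at hp
  | a :: b :: t, hc, p, hp => by
    rw [arcs_cons_cons, List.mem_cons] at hp
    rw [List.isChain_cons_cons] at hc
    rcases hp with rfl | hp
    · exact hc.1
    · exact adj_of_mem_arcs hc.2 hp

lemma count_dropLast_eq_count_tail [DecidableEq V] {l : List V} (hc : l.head? = l.getLast?)
    (w : V) : l.dropLast.count w = l.tail.count w := by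
  obtain _ | ⟨h, t⟩ := l
  · rfl
  have hlast : (h :: t).getLast (List.cons_ne_nil h t) = h := by
    simpa [List.getLast?_eq_some_getLast] using hc.symm
  have hsplit := congrArg (List.count w) (List.dropLast_append_getLast (List.cons_ne_nil h t))
  rw [hlast] at hsplit
  simp only [List.count_append, List.count_cons, List.count_nil, List.tail_cons] at hsplit ⊢
  omega

lemma countP_fst_arcs_eq_countP_snd [DecidableEq V] {l : List V} (hc : l.head? = l.getLast?)
    (w : V) : (arcs l).countP (·.1 = w) = (arcs l).countP (·.2 = w) := by
  have hfst : (arcs l).countP (·.1 = w) = l.dropLast.count w := by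
    rw [← map_fst_arcs, List.count, List.countP_map]; rfl
  have hsnd : (arcs l).countP (·.2 = w) = l.tail.count w := by
    rw [← map_snd_arcs, List.count, List.countP_map]; rfl
  rw [hfst, hsnd, count_dropLast_eq_count_tail hc]

lemma mem_dropLast_of_head?_eq_getLast? {l : List V} (hc : l.head? = l.getLast?) {a b : V}
    (hab : a ≠ b) (ha : a ∈ l) (hb : b ∈ l) : a ∈ l.dropLast := by
  obtain _ | ⟨h, t⟩ := l
  · simp at ha
  have ht : t ≠ [] := by rintro rfl; simp_all
  rw [List.dropLast_cons_of_ne_nil ht, List.mem_cons]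
  rcases List.mem_cons.1 ha with rfl | ha
  · exact .inl rfl
  have hlast : t.getLast ht = h := by
    simpa [List.getLast?_eq_some_getLast, List.getLast_cons ht] using hc.symm
  rw [← List.dropLast_append_getLast ht, hlast, List.mem_append, List.mem_singleton] at ha
  exact ha.symm

theorem not_supereulerian_of_unique_exits (D : Digr V) {a b t w : V} (hab : a ≠ b)
    (ha : ∀ x, D.Adj a x → x = t) (hb : ∀ x, D.Adj b x → x = t) (ht : ∀ x, D.Adj t x → x = w) :
    ¬ D.Supereulerian := by
  classical
  rintro ⟨l, ⟨⟨-, hchain, hnodup⟩, hc⟩, hspan⟩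
  have exit_arc : ∀ c d, c ≠ d → (∀ x, D.Adj c x → x = t) → (c, t) ∈ arcs l := by
    intro c d hcd hc'
    have hmem := mem_dropLast_of_head?_eq_getLast? hc hcd (hspan c) (hspan d)
    rw [← map_fst_arcs] at hmem
    obtain ⟨p, hp, rfl⟩ := List.mem_map.1 hmem
    rwa [← hc' p.2 (adj_of_mem_arcs hchain hp)]
  have entered_twice : 2 ≤ (arcs l).countP (·.2 = t) := by
    have hsub : [(a, t), (b, t)].Subperm (arcs l) :=
      List.subperm_of_subset (by simp [hab])
        (by simp [List.subset_def, exit_arc a b hab ha, exit_arc b a hab.symm hb])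
    simpa using hsub.countP_le (·.2 = t)
  have left_once : (arcs l).countP (·.1 = t) ≤ 1 := by
    have hrep : (arcs l).filter (·.1 = t) = .replicate ((arcs l).countP (·.1 = t)) (t, w) := by
      rw [List.eq_replicate_iff, List.countP_eq_length_filter]
      refine ⟨rfl, fun p hp => ?_⟩
      obtain ⟨hp, hpt⟩ := List.mem_filter.1 hp
      have hpt : p.1 = t := by simpa using hpt
      have hadj := adj_of_mem_arcs hchain hp
      rw [hpt] at hadj
      exact Prod.ext hpt (ht _ hadj)
    exact List.nodup_replicate.1 (hrep ▸ hnodup.filter _)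
  have := countP_fst_arcs_eq_countP_snd hc t
  omega

end Digr

/-- Vertices `0, 1` are `u, v`, vertex `2` is `w'` (so `K*_{n₁}` is a single vertex), and
`3, …, n - 1` span `K*_{n₂}` with `w = 3`. -/
def extremalDigraph (n : ℕ) : Digr (Fin n) where
  Adj x y := (3 ≤ x.val ∧ 3 ≤ y.val ∧ x.val ≠ y.val) ∨ (3 ≤ x.val ∧ y.val ≤ 2) ∨
    (x.val ≤ 1 ∧ y.val = 2) ∨ (x.val = 2 ∧ y.val = 3)
  loopless x := by omega

namespace extremalDigraph

variable {n : ℕ}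

lemma adj_iff {x y : Fin n} :
    (extremalDigraph n).Adj x y ↔ (3 ≤ x.val ∧ 3 ≤ y.val ∧ x.val ≠ y.val) ∨
      (3 ≤ x.val ∧ y.val ≤ 2) ∨ (x.val ≤ 1 ∧ y.val = 2) ∨ (x.val = 2 ∧ y.val = 3) :=
  Iff.rfl

lemma strong (hn : 4 ≤ n) : (extremalDigraph n).Strong := by
  let w' : Fin n := ⟨2, by omega⟩
  let w : Fin n := ⟨3, by omega⟩
  have to_w' (x : Fin n) : Relation.ReflTransGen (extremalDigraph n).Adj x w' := by
    by_cases hx : x = w'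
    · exact hx ▸ .refl
    · exact .single (adj_iff.2 (by simp only [w', Fin.ext_iff, and_true] at hx ⊢; omega))
  have from_w (y : Fin n) : Relation.ReflTransGen (extremalDigraph n).Adj w y := by
    by_cases hy : y = w
    · exact hy ▸ .refl
    · exact .single (adj_iff.2 (by simp only [w, Fin.ext_iff] at hy ⊢; omega))
  intro x y
  exact ((to_w' x).tail (adj_iff.2 (by simp [w', w]))).trans (from_w y)

lemma not_supereulerian (hn : 4 ≤ n) : ¬ (extremalDigraph n).Supereulerian :=
  Digr.not_supereulerian_of_unique_exits (a := ⟨0, by omega⟩) (b := ⟨1, by omega⟩)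
    (t := ⟨2, by omega⟩) (w := ⟨3, by omega⟩) _ (by simp)
    (fun x hx => Fin.ext (by rw [adj_iff] at hx; simp only at hx ⊢; omega))
    (fun x hx => Fin.ext (by rw [adj_iff] at hx; simp only at hx ⊢; omega))
    (fun x hx => Fin.ext (by rw [adj_iff] at hx; simp only at hx ⊢; omega))

lemma inDeg_of_val_le_one (hn : 4 ≤ n) {c : Fin n} (hc : c.val ≤ 1) :
    (extremalDigraph n).inDeg c = n - 3 := by
  have hset : {x | (extremalDigraph n).Adj x c} = ↑(Finset.Ici (⟨3, by omega⟩ : Fin n)) := by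
    ext x
    simp only [Set.mem_ofPred_eq, adj_iff, Finset.coe_Ici, Set.mem_Ici, Fin.le_def]
    omega
  rw [Digr.inDeg, hset, Set.ncard_coe_finset, Fin.card_Ici]

lemma outDeg_of_val_le_one (hn : 4 ≤ n) {c : Fin n} (hc : c.val ≤ 1) :
    (extremalDigraph n).outDeg c = 1 := by
  have hset : {y | (extremalDigraph n).Adj c y} = {⟨2, by omega⟩} := by
    ext y
    simp only [Set.mem_ofPred_eq, adj_iff, Set.mem_singleton_iff, Fin.ext_iff]
    omega
  rw [Digr.outDeg, hset, Set.ncard_singleton]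

lemma eq_pair_of_nonadjacent (hn : 4 ≤ n) {x y : Fin n} (hxy : x ≠ y)
    (h : (extremalDigraph n).Nonadjacent x y) :
    ({x, y} : Set (Fin n)) = {⟨0, by omega⟩, ⟨1, by omega⟩} := by
  obtain ⟨hxy', hyx'⟩ := h
  rw [adj_iff] at hxy' hyx'
  rw [Ne, Fin.ext_iff] at hxy
  obtain ⟨hx, hy⟩ | ⟨hx, hy⟩ : (x.val = 0 ∧ y.val = 1) ∨ (x.val = 1 ∧ y.val = 0) := by omega
  · rw [(Fin.ext hx : x = ⟨0, _⟩), (Fin.ext hy : y = ⟨1, _⟩)]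
  · rw [(Fin.ext hx : x = ⟨1, _⟩), (Fin.ext hy : y = ⟨0, _⟩), Set.pair_comm]

end extremalDigraph

/-- For every $n ≥ 4$ there is a strong nonsupereulerian digraph on $n$
vertices with exactly one dominated pair of nonadjacent vertices $\{u,v\}$,
and this pair satisfies $d(u)+d(v) = 2n-4$ and
$d^-(u)+d^+(v) = d^+(u)+d^-(v) = n-2$. -/
theorem stmt9 (n : ℕ) (hn : 4 ≤ n) :
    ∃ (V : Type) (_ : Fintype V) (D : Digr V),
      Fintype.card V = n ∧ D.Strong ∧ ¬ D.Supereulerian ∧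
      ∃ u v : V, u ≠ v ∧ D.Nonadjacent u v ∧ D.Dominated u v ∧
        D.deg u + D.deg v = 2 * n - 4 ∧
        D.inDeg u + D.outDeg v = n - 2 ∧
        D.outDeg u + D.inDeg v = n - 2 ∧
        (∀ u' v' : V, u' ≠ v' → D.Nonadjacent u' v' → D.Dominated u' v' →
          ({u', v'} : Set V) = {u, v}) := by
  open extremalDigraph in
  let u : Fin n := ⟨0, by omega⟩
  let v : Fin n := ⟨1, by omega⟩
  have hu : (extremalDigraph n).inDeg u = n - 3 ∧ (extremalDigraph n).outDeg u = 1 :=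
    ⟨inDeg_of_val_le_one hn zero_le_one, outDeg_of_val_le_one hn zero_le_one⟩
  have hv : (extremalDigraph n).inDeg v = n - 3 ∧ (extremalDigraph n).outDeg v = 1 :=
    ⟨inDeg_of_val_le_one hn le_rfl, outDeg_of_val_le_one hn le_rfl⟩
  refine ⟨Fin n, inferInstance, extremalDigraph n, Fintype.card_fin n, strong hn,
    not_supereulerian hn, u, v, by simp [u, v], ?_, ?_, ?_, ?_, ?_, ?_⟩
  · exact ⟨by simp [u, v, adj_iff], by simp [u, v, adj_iff]⟩
  · exact ⟨⟨3, by omega⟩, by simp [u, adj_iff], by simp [v, adj_iff]⟩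
  · rw [Digr.deg, Digr.deg, hu.1, hu.2, hv.1, hv.2]
    omega
  · rw [hu.1, hv.2]
    omega
  · rw [hu.2, hv.1]
    omega
  · exact fun x y hxy hnadj _ => eq_pair_of_nonadjacent hn hxy hnadj
end
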